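/- arXiv:0811.1649 — 8 statements merged into one kernel-verified Lean document; each statement's English description precedes it below -/
import Mathlib

section
/- Let P be a non-signalling bipartite conditional probability distribution on 1-bit alphabets. If P is local, then (1/4)·Σ_{u,v ∈ {0,1}} Σ_{x,y ∈ {0,1}, x⊕y = u·v} P(x,y|u,v) ≤ 3/4. Equivalently, if the probability that X⊕Y = U·V under uniformly random inputs exceeds 3/4, then P is non-local. -/
open Finset

/-- n-bit strings. -/
abbrev Bits (n : ℕ) := Fin n → Bool

/-- A bipartite conditional "box" on n-bit alphabets: `P x y u v` is the
probability of outputs `(x, y)` given inputs `(u, v)`. -/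
abbrev Box (n : ℕ) := Bits n → Bits n → Bits n → Bits n → ℝ

/-- `P` is a bipartite conditional probability distribution. -/
def IsBox {n : ℕ} (P : Box n) : Prop :=
  (∀ x y u v, 0 ≤ P x y u v) ∧
  (∀ u v, ∑ x : Bits n, ∑ y : Bits n, P x y u v = 1)

/-- `P` is non-signalling. -/
def NonSignalling {n : ℕ} (P : Box n) : Prop :=
  (∀ y v u u', ∑ x : Bits n, P x y u v = ∑ x : Bits n, P x y u' v) ∧
  (∀ x u v v', ∑ y : Bits n, P x y u v = ∑ y : Bits n, P x y u v')

/-- The local deterministic box given by response functions `f` (Alice) and `g` (Bob). -/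
def detBox {n : ℕ} (f g : Bits n → Bits n) : Box n :=
  fun x y u v => if x = f u ∧ y = g v then 1 else 0

/-- `P` is local deterministic. -/
def IsLocalDet {n : ℕ} (P : Box n) : Prop :=
  ∃ f g : Bits n → Bits n, P = detBox f g

/-- `P` is local: a convex combination of local deterministic boxes. -/
def IsLocal {n : ℕ} (P : Box n) : Prop :=
  ∃ w : (Bits n → Bits n) × (Bits n → Bits n) → ℝ,
    (∀ fg, 0 ≤ w fg) ∧ (∑ fg, w fg = 1) ∧
    (∀ x y u v, P x y u v =
      ∑ fg : (Bits n → Bits n) × (Bits n → Bits n), w fg * detBox fg.1 fg.2 x y u v)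

/-- The local part of `P`: the maximal weight `p` such that `P` is a convex
combination of a local box (weight `p`) and a non-signalling box (weight `1 - p`). -/
noncomputable def localPart {n : ℕ} (P : Box n) : ℝ :=
  sSup {p : ℝ | 0 ≤ p ∧ p ≤ 1 ∧
    ∃ PL PNS : Box n, IsBox PL ∧ IsLocal PL ∧ IsBox PNS ∧ NonSignalling PNS ∧
      ∀ x y u v, P x y u v = p * PL x y u v + (1 - p) * PNS x y u v}

/-- Single-copy isotropic ε-PRB entries. -/
noncomputable def isoPRB1 (ε : ℝ) (x y u v : Bool) : ℝ :=
  if xor x y = (u && v) then (1 - ε) / 2 else ε / 2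

/-- The system of n independent isotropic ε-PRBs. -/
noncomputable def isoPRB (n : ℕ) (ε : ℝ) : Box n :=
  fun x y u v => ∏ i : Fin n, isoPRB1 ε (x i) (y i) (u i) (v i)

/-- Single-copy maximally biased δ-PRB entries. -/
noncomputable def biasedPRB1 (δ : ℝ) (x y u v : Bool) : ℝ :=
  if u && v then
    match x, y with
    | false, false => 0
    | true,  false => 1 / 2 - δ / 2
    | false, true  => 1 / 2 + δ / 2
    | true,  true  => 0
  else
    match x, y with
    | false, false => 1 / 2 - δ / 2
    | true,  false => 0
    | false, true  => δ
    | true,  true  => 1 / 2 - δ / 2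

/-- The system of n independent maximally biased δ-PRBs. -/
noncomputable def biasedPRB (n : ℕ) (δ : ℝ) : Box n :=
  fun x y u v => ∏ i : Fin n, biasedPRB1 δ (x i) (y i) (u i) (v i)

lemma sum_bits1 (F : Bits 1 → ℝ) :
    ∑ x : Bits 1, F x = F (fun _ => false) + F (fun _ => true) := by
  rw [← Equiv.sum_comp (Equiv.funUnique (Fin 1) Bool).symm F, Fintype.sum_bool]
  rw [add_comm]; rfl

lemma eqFun (b : Bool) (z : Bits 1) : ((fun _ => b : Bits 1) = z) ↔ b = z 0 := by
  constructor
  · intro h; rw [← h]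
  · intro h; funext i; have : i = 0 := Subsingleton.elim _ _; rw [this, ← h]

lemma det_chsh (f g : Bits 1 → Bits 1) :
    ∑ u : Bits 1, ∑ v : Bits 1, ∑ x : Bits 1, ∑ y : Bits 1,
      (if xor (x 0) (y 0) = (u 0 && v 0) then detBox f g x y u v else 0) ≤ 3 := by
  simp only [sum_bits1, detBox, eqFun]
  set A0 := f (fun _ => false) 0 with hA0
  set A1 := f (fun _ => true) 0 with hA1
  set B0 := g (fun _ => false) 0 with hB0
  set B1 := g (fun _ => true) 0 with hB1
  rcases A0 <;> rcases A1 <;> rcases B0 <;> rcases B1 <;> norm_num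

lemma ite_sum {ι : Type*} {c : Prop} [Decidable c] (s : Finset ι) (f : ι → ℝ) :
    (if c then ∑ i ∈ s, f i else 0) = ∑ i ∈ s, if c then f i else 0 := by
  split_ifs with h
  · rfl
  · simp

/-- a local box on 1-bit alphabets satisfies the CHSH inequality. -/
theorem stmt1 (P : Box 1) (hP : IsBox P) (hns : NonSignalling P) (hloc : IsLocal P) :
    (1 / 4 : ℝ) * ∑ u : Bits 1, ∑ v : Bits 1, ∑ x : Bits 1, ∑ y : Bits 1,
        (if xor (x 0) (y 0) = (u 0 && v 0) then P x y u v else 0) ≤ 3 / 4 := by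
  obtain ⟨w, hw0, hw1, hwP⟩ := hloc
  have key : ∑ u : Bits 1, ∑ v : Bits 1, ∑ x : Bits 1, ∑ y : Bits 1,
        (if xor (x 0) (y 0) = (u 0 && v 0) then P x y u v else 0)
      = ∑ fg : (Bits 1 → Bits 1) × (Bits 1 → Bits 1), w fg *
          ∑ u : Bits 1, ∑ v : Bits 1, ∑ x : Bits 1, ∑ y : Bits 1,
            (if xor (x 0) (y 0) = (u 0 && v 0) then detBox fg.1 fg.2 x y u v else 0) := by
    simp_rw [hwP, ite_sum, Finset.mul_sum, mul_ite, mul_zero]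
    conv_lhs => enter [2, u, 2, v, 2, x]; rw [Finset.sum_comm]
    conv_lhs => enter [2, u, 2, v]; rw [Finset.sum_comm]
    conv_lhs => enter [2, u]; rw [Finset.sum_comm]
    rw [Finset.sum_comm]
  rw [key]
  have h3 : ∑ fg : (Bits 1 → Bits 1) × (Bits 1 → Bits 1), w fg *
          (∑ u : Bits 1, ∑ v : Bits 1, ∑ x : Bits 1, ∑ y : Bits 1,
            (if xor (x 0) (y 0) = (u 0 && v 0) then detBox fg.1 fg.2 x y u v else 0)) ≤ 3 := by
    calc _ ≤ ∑ fg : (Bits 1 → Bits 1) × (Bits 1 → Bits 1), w fg * 3 := by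
            refine Finset.sum_le_sum fun fg _ => ?_
            exact mul_le_mul_of_nonneg_left (det_chsh fg.1 fg.2) (hw0 fg)
      _ = 3 := by rw [← Finset.sum_mul, hw1, one_mul]
  linarith
end

section
/- Let P be a non-signalling bipartite conditional probability distribution on n-bit alphabets. The local part of P equals the maximum, over all families (p_{f,g})_{f,g : {0,1}ⁿ → {0,1}ⁿ} of non-negative reals satisfying Σ_{f,g} p_{f,g}·𝟙[x = f(u)]·𝟙[y = g(v)] ≤ P(x,y|u,v) for all x,y,u,v ∈ {0,1}ⁿ, of the quantity Σ_{f,g} p_{f,g}. -/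
open Finset

/-!
A decomposition `P = p • P_L + (1 - p) • P_NS` with `P_L = ∑ q_{f,g} D_{f,g}` a mixture of
deterministic boxes yields the dominated family `p_{f,g} = p q_{f,g}` of total weight `p`.
Conversely, a dominated family of total weight `s` splits `P` into `∑ p_{f,g} D_{f,g} = s • P_L`
and a remainder `(1 - s) • P_NS`, which is non-negative by domination and non-signalling because
deterministic boxes are. So both problems range over the same set of values, the image of a
compact polytope of weights, and the supremum defining the local part is attained.
-/

lemma NonSignalling.smul_sub {n : ℕ} {P Q : Box n} (hP : NonSignalling P) (hQ : NonSignalling Q)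
    (a : ℝ) : NonSignalling (a • (P - Q)) := by
  constructor
  · intro y v u u'
    simp only [Pi.smul_apply, Pi.sub_apply, smul_eq_mul, ← Finset.mul_sum,
      Finset.sum_sub_distrib, hP.1 y v u u', hQ.1 y v u u']
  · intro x u v v'
    simp only [Pi.smul_apply, Pi.sub_apply, smul_eq_mul, ← Finset.mul_sum,
      Finset.sum_sub_distrib, hP.2 x u v v', hQ.2 x u v v']

namespace Box

variable {n : ℕ}

abbrev Strategy (n : ℕ) := (Bits n → Bits n) × (Bits n → Bits n)

def mix (w : Strategy n → ℝ) : Box n :=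
  fun x y u v => ∑ fg, w fg * detBox fg.1 fg.2 x y u v

lemma detBox_nonneg (f g : Bits n → Bits n) (x y u v : Bits n) : 0 ≤ detBox f g x y u v := by
  unfold detBox; split <;> norm_num

lemma sum_left_detBox (f g : Bits n → Bits n) (y u v : Bits n) :
    ∑ x, detBox f g x y u v = if y = g v then 1 else 0 := by
  simp [detBox, ite_and]

lemma sum_right_detBox (f g : Bits n → Bits n) (x u v : Bits n) :
    ∑ y, detBox f g x y u v = if x = f u then 1 else 0 := by
  simp [detBox, ite_and]

lemma mix_nonneg {w : Strategy n → ℝ} (hw : ∀ fg, 0 ≤ w fg) (x y u v : Bits n) :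
    0 ≤ mix w x y u v :=
  Finset.sum_nonneg fun fg _ => mul_nonneg (hw fg) (detBox_nonneg _ _ _ _ _ _)

lemma sum_left_mix (w : Strategy n → ℝ) (y u v : Bits n) :
    ∑ x, mix w x y u v = ∑ fg : Strategy n, w fg * if y = fg.2 v then 1 else 0 := by
  simp only [mix]
  rw [Finset.sum_comm]
  simp only [← Finset.mul_sum, sum_left_detBox]

lemma sum_right_mix (w : Strategy n → ℝ) (x u v : Bits n) :
    ∑ y, mix w x y u v = ∑ fg : Strategy n, w fg * if x = fg.1 u then 1 else 0 := by
  simp only [mix]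
  rw [Finset.sum_comm]
  simp only [← Finset.mul_sum, sum_right_detBox]

lemma sum_sum_mix (w : Strategy n → ℝ) (u v : Bits n) :
    ∑ x, ∑ y, mix w x y u v = ∑ fg, w fg := by
  simp only [sum_right_mix]
  rw [Finset.sum_comm]
  simp

lemma nonSignalling_mix (w : Strategy n → ℝ) : NonSignalling (mix w) :=
  ⟨fun y v u u' => by rw [sum_left_mix, sum_left_mix],
    fun x u v v' => by rw [sum_right_mix, sum_right_mix]⟩

lemma isBox_mix {w : Strategy n → ℝ} (hw : ∀ fg, 0 ≤ w fg) (hw₁ : ∑ fg, w fg = 1) :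
    IsBox (mix w) :=
  ⟨mix_nonneg hw, fun u v => by rw [sum_sum_mix, hw₁]⟩

lemma isLocal_mix {w : Strategy n → ℝ} (hw : ∀ fg, 0 ≤ w fg) (hw₁ : ∑ fg, w fg = 1) :
    IsLocal (mix w) :=
  ⟨w, hw, hw₁, fun _ _ _ _ => rfl⟩

lemma eq_zero_of_sum_sum_eq_zero {R : Box n} (hR : ∀ x y u v, 0 ≤ R x y u v) {u v : Bits n}
    (h : ∑ x, ∑ y, R x y u v = 0) (x y : Bits n) : R x y u v = 0 := by
  rw [Finset.sum_eq_zero_iff_of_nonneg fun x _ => Finset.sum_nonneg fun y _ => hR x y u v] at h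
  exact (Finset.sum_eq_zero_iff_of_nonneg fun y _ => hR x y u v).1 (h x (Finset.mem_univ x)) y
    (Finset.mem_univ y)

def dominatedWeights (P : Box n) : Set (Strategy n → ℝ) :=
  {w | (∀ fg, 0 ≤ w fg) ∧ ∀ x y u v, mix w x y u v ≤ P x y u v}

lemma sum_le_one_of_mem_dominatedWeights {P : Box n} (hP : IsBox P)
    {w : Strategy n → ℝ} (hw : w ∈ dominatedWeights P) : ∑ fg, w fg ≤ 1 := by
  have u : Bits n := fun _ => false
  calc ∑ fg, w fg = ∑ x, ∑ y, mix w x y u u := (sum_sum_mix w u u).symm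
    _ ≤ ∑ x, ∑ y, P x y u u := by gcongr with x _ y _; exact hw.2 x y u u
    _ = 1 := hP.2 u u

lemma zero_mem_dominatedWeights {P : Box n} (hP : IsBox P) : 0 ∈ dominatedWeights P :=
  ⟨fun _ => le_rfl, fun x y u v => by simpa [mix] using hP.1 x y u v⟩

lemma isCompact_dominatedWeights {P : Box n} (hP : IsBox P) :
    IsCompact (dominatedWeights P) := by
  have hsub : dominatedWeights P ⊆ Set.Icc 0 1 := fun w hw =>
    ⟨hw.1, fun fg => (Finset.single_le_sum (fun i _ => hw.1 i) (Finset.mem_univ fg)).trans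
      (sum_le_one_of_mem_dominatedWeights hP hw)⟩
  have hclosed : IsClosed (dominatedWeights P) := by
    simp only [dominatedWeights, Set.ofPred_and, Set.ofPred_forall]
    refine (isClosed_iInter fun fg => isClosed_le continuous_const (continuous_apply fg)).inter
      (isClosed_iInter fun x => isClosed_iInter fun y => isClosed_iInter fun u =>
        isClosed_iInter fun v => isClosed_le ?_ continuous_const)
    exact continuous_finsetSum _ fun fg _ => (continuous_apply fg).mul continuous_const
  exact isCompact_Icc.of_isClosed_subset hclosed hsub

lemma exists_dominatedWeights_of_decomposition {P PL PNS : Box n} {p : ℝ} (hp₀ : 0 ≤ p)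
    (hp₁ : p ≤ 1) (hPL : IsLocal PL) (hPNS : IsBox PNS)
    (hdecomp : ∀ x y u v, P x y u v = p * PL x y u v + (1 - p) * PNS x y u v) :
    ∃ w ∈ dominatedWeights P, p = ∑ fg, w fg := by
  obtain ⟨q, hq, hq₁, hPLq⟩ := hPL
  refine ⟨p • q, ⟨fun fg => mul_nonneg hp₀ (hq fg), fun x y u v => ?_⟩, by
    simp [← Finset.mul_sum, hq₁]⟩
  have hmix : mix (p • q) x y u v = p * PL x y u v := by
    simp only [mix, hPLq, Finset.mul_sum, Pi.smul_apply, smul_eq_mul, mul_assoc]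
  rw [hmix, hdecomp]
  nlinarith [hPNS.1 x y u v]

lemma exists_local_mix_eq_smul {w : Strategy n → ℝ} (hw : ∀ fg, 0 ≤ w fg) :
    ∃ PL, IsBox PL ∧ IsLocal PL ∧ ∀ x y u v, mix w x y u v = (∑ fg, w fg) * PL x y u v := by
  by_cases hs : ∑ fg, w fg = 0
  · have hw₀ : w = 0 := funext fun fg =>
      (Finset.sum_eq_zero_iff_of_nonneg fun i _ => hw i).1 hs fg (Finset.mem_univ fg)
    set c : ℝ := (Fintype.card (Strategy n) : ℝ)⁻¹
    have hc : ∑ _ : Strategy n, c = 1 := by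
      rw [Finset.sum_const, Finset.card_univ, nsmul_eq_mul]
      exact mul_inv_cancel₀ (Nat.cast_ne_zero.2 Fintype.card_ne_zero)
    refine ⟨mix fun _ => c, isBox_mix (fun _ => by positivity) hc,
      isLocal_mix (fun _ => by positivity) hc, fun x y u v => ?_⟩
    simp [mix, hw₀]
  · have hw₁ : ∑ fg, ((∑ fg, w fg)⁻¹ • w) fg = 1 := by
      simp [← Finset.mul_sum, inv_mul_cancel₀ hs]
    have hw' : ∀ fg, 0 ≤ ((∑ fg, w fg)⁻¹ • w) fg := fun fg =>
      mul_nonneg (inv_nonneg.2 (Finset.sum_nonneg fun i _ => hw i)) (hw fg)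
    refine ⟨mix ((∑ fg, w fg)⁻¹ • w), isBox_mix hw' hw₁, isLocal_mix hw' hw₁,
      fun x y u v => ?_⟩
    simp only [mix, Finset.mul_sum, Pi.smul_apply, smul_eq_mul, ← mul_assoc,
      mul_inv_cancel₀ hs, one_mul]

lemma exists_nonSignalling_sub_mix_eq_smul {P : Box n} (hP : IsBox P) (hns : NonSignalling P)
    {w : Strategy n → ℝ} (hw : w ∈ dominatedWeights P) :
    ∃ PNS, IsBox PNS ∧ NonSignalling PNS ∧
      ∀ x y u v, P x y u v - mix w x y u v = (1 - ∑ fg, w fg) * PNS x y u v := by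
  have hR : ∀ x y u v, 0 ≤ P x y u v - mix w x y u v := fun x y u v => sub_nonneg.2 (hw.2 ..)
  have hRsum : ∀ u v, ∑ x, ∑ y, (P x y u v - mix w x y u v) = 1 - ∑ fg, w fg := fun u v => by
    simp only [Finset.sum_sub_distrib, hP.2 u v, sum_sum_mix]
  by_cases hs : 1 - ∑ fg, w fg = 0
  · refine ⟨P, hP, hns, fun x y u v => ?_⟩
    rw [hs, zero_mul]
    exact eq_zero_of_sum_sum_eq_zero hR ((hRsum u v).trans hs) x y
  · refine ⟨(1 - ∑ fg, w fg)⁻¹ • (P - mix w),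
      ⟨fun x y u v => mul_nonneg (inv_nonneg.2 ?_) (hR x y u v), fun u v => ?_⟩,
      hns.smul_sub (nonSignalling_mix w) _, fun x y u v => ?_⟩
    · linarith [sum_le_one_of_mem_dominatedWeights hP hw]
    · simp only [Pi.smul_apply, Pi.sub_apply, smul_eq_mul, ← Finset.mul_sum, hRsum,
        inv_mul_cancel₀ hs]
    · simp only [Pi.smul_apply, Pi.sub_apply, smul_eq_mul, ← mul_assoc, mul_inv_cancel₀ hs,
        one_mul]

lemma localPart_eq_sSup_dominatedWeights {P : Box n} (hP : IsBox P) (hns : NonSignalling P) :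
    localPart P = sSup ((fun w => ∑ fg, w fg) '' dominatedWeights P) := by
  unfold localPart
  congr 1
  ext p
  constructor
  · rintro ⟨hp₀, hp₁, PL, PNS, -, hPL, hPNS, -, hdecomp⟩
    obtain ⟨w, hw, rfl⟩ := exists_dominatedWeights_of_decomposition hp₀ hp₁ hPL hPNS hdecomp
    exact ⟨w, hw, rfl⟩
  · rintro ⟨w, hw, rfl⟩
    obtain ⟨PL, hPLbox, hPL, hmix⟩ := exists_local_mix_eq_smul hw.1
    obtain ⟨PNS, hPNSbox, hPNS, hrest⟩ := exists_nonSignalling_sub_mix_eq_smul hP hns hw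
    refine ⟨Finset.sum_nonneg fun fg _ => hw.1 fg, sum_le_one_of_mem_dominatedWeights hP hw,
      PL, PNS, hPLbox, hPL, hPNSbox, hPNS, fun x y u v => ?_⟩
    linarith [hmix x y u v, hrest x y u v]

end Box

theorem stmt2_general (n : ℕ) (P : Box n) (hP : IsBox P) (hns : NonSignalling P) :
    IsGreatest {s : ℝ |
      ∃ w : (Bits n → Bits n) × (Bits n → Bits n) → ℝ,
        (∀ fg, 0 ≤ w fg) ∧
        (∀ x y u v, (∑ fg : (Bits n → Bits n) × (Bits n → Bits n),
            w fg * detBox fg.1 fg.2 x y u v) ≤ P x y u v) ∧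
        s = ∑ fg, w fg} (localPart P) := by
  have hset : {s : ℝ | ∃ w : (Bits n → Bits n) × (Bits n → Bits n) → ℝ, (∀ fg, 0 ≤ w fg) ∧
      (∀ x y u v, (∑ fg : (Bits n → Bits n) × (Bits n → Bits n),
        w fg * detBox fg.1 fg.2 x y u v) ≤ P x y u v) ∧ s = ∑ fg, w fg} =
      (fun w => ∑ fg, w fg) '' P.dominatedWeights := by
    ext s
    exact ⟨fun ⟨w, hw, hdom, hs⟩ => ⟨w, ⟨hw, hdom⟩, hs.symm⟩,
      fun ⟨w, ⟨hw, hdom⟩, hs⟩ => ⟨w, hw, hdom, hs.symm⟩⟩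
  rw [hset, Box.localPart_eq_sSup_dominatedWeights hP hns]
  exact ((Box.isCompact_dominatedWeights hP).image
    (continuous_finsetSum _ fun fg _ => continuous_apply fg)).isGreatest_sSup
    ((Set.nonempty_of_mem (Box.zero_mem_dominatedWeights hP)).image _)

/-- the local part is the maximum of `∑ p_{f,g}` over subconvex families of
local deterministic strategies dominated by `P`. -/
theorem stmt2 (n : ℕ) (hn : 1 ≤ n) (P : Box n) (hP : IsBox P) (hns : NonSignalling P) :
    IsGreatest {s : ℝ |
      ∃ w : (Bits n → Bits n) × (Bits n → Bits n) → ℝ,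
        (∀ fg, 0 ≤ w fg) ∧
        (∀ x y u v, (∑ fg : (Bits n → Bits n) × (Bits n → Bits n),
            w fg * detBox fg.1 fg.2 x y u v) ≤ P x y u v) ∧
        s = ∑ fg, w fg} (localPart P) :=
  stmt2_general n P hP hns
end

section
/- For every ε ∈ [0,1/4], the local part of the isotropic ε-PRB P^{1,ε} equals 4ε. -/
open Finset

/-!
The CHSH loss `L P = ∑_{x ⊕ y ≠ u v} P(x, y | u, v)` is linear, nonnegative on nonnegative
boxes, at least `1` on every deterministic box (no classical strategy wins the CHSH game on all
four input pairs), and equals `4 ε` on `P^{1,ε}`. So `P^{1,ε} = p P_L + (1 - p) P_NS` forces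
`p ≤ p L P_L + (1 - p) L P_NS = L P^{1,ε} = 4 ε`. Conversely `P^{1,ε} = 4 ε P^{1,1/4} + (1 - 4 ε) P^{1,0}`,
where `P^{1,0}` is the PR box and `P^{1,1/4}` is the uniform mixture of the eight deterministic
strategies that win on exactly three input pairs.
-/

lemma sum_bits_one {M : Type*} [AddCommMonoid M] (F : Bits 1 → M) :
    ∑ x, F x = F (fun _ => true) + F (fun _ => false) :=
  ((Equiv.funUnique (Fin 1) Bool).symm.sum_comp F).symm.trans (Fintype.sum_bool _)

lemma isoPRB_one_apply (ε : ℝ) (x y u v : Bits 1) :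
    isoPRB 1 ε x y u v = isoPRB1 ε (x 0) (y 0) (u 0) (v 0) :=
  Fin.prod_univ_one _

lemma detBox_one_apply (f g : Bits 1 → Bits 1) (x y u v : Bits 1) :
    detBox f g x y u v = if x 0 = f u 0 ∧ y 0 = g v 0 then 1 else 0 := by
  simp only [detBox, (Equiv.funUnique (Fin 1) Bool).injective.eq_iff.symm]
  rfl

def bitsOneFunEquiv : (Bits 1 → Bits 1) ≃ (Bool → Bool) :=
  (Equiv.funUnique (Fin 1) Bool).arrowCongr (Equiv.funUnique (Fin 1) Bool)

lemma bitsOneFunEquiv_symm_apply (a : Bool → Bool) (u : Bits 1) :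
    bitsOneFunEquiv.symm a u 0 = a (u 0) :=
  rfl

lemma isoPRB_one_eq_add (ε : ℝ) (x y u v : Bits 1) :
    isoPRB 1 ε x y u v =
      4 * ε * isoPRB 1 (1 / 4) x y u v + (1 - 4 * ε) * isoPRB 1 0 x y u v := by
  simp only [isoPRB_one_apply, isoPRB1]
  split_ifs <;> ring

lemma sum_isoPRB_one_left (ε : ℝ) (y u v : Bits 1) : ∑ x, isoPRB 1 ε x y u v = 1 / 2 := by
  simp only [sum_bits_one, isoPRB_one_apply, isoPRB1]
  cases y 0 <;> cases u 0 <;> cases v 0 <;> norm_num <;> ring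

lemma sum_isoPRB_one_right (ε : ℝ) (x u v : Bits 1) : ∑ y, isoPRB 1 ε x y u v = 1 / 2 := by
  simp only [sum_bits_one, isoPRB_one_apply, isoPRB1]
  cases x 0 <;> cases u 0 <;> cases v 0 <;> norm_num <;> ring

lemma nonSignalling_isoPRB_one (ε : ℝ) : NonSignalling (isoPRB 1 ε) :=
  ⟨fun y v u u' => by rw [sum_isoPRB_one_left, sum_isoPRB_one_left],
    fun x u v v' => by rw [sum_isoPRB_one_right, sum_isoPRB_one_right]⟩

lemma isBox_isoPRB_one {ε : ℝ} (h0 : 0 ≤ ε) (h1 : ε ≤ 1) : IsBox (isoPRB 1 ε) := by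
  refine ⟨fun x y u v => ?_, fun u v => ?_⟩
  · rw [isoPRB_one_apply, isoPRB1]
    split_ifs <;> linarith
  · simp only [sum_isoPRB_one_right, sum_const, card_univ, Fintype.card_bool,
      Fintype.card_pi, prod_const, Fintype.card_fin]
    norm_num

def chshWins (a b : Bool → Bool) : ℕ :=
  #{uv : Bool × Bool | (a uv.1 ^^ b uv.2) = (uv.1 && uv.2)}

noncomputable def chshMixWeight (a b : Bool → Bool) : ℝ :=
  if chshWins a b = 3 then 1 / 8 else 0

lemma sum_chshMixWeight : ∑ a, ∑ b, chshMixWeight a b = 1 := by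
  simp only [← (Equiv.boolArrowEquivProd Bool).symm.sum_comp, Fintype.sum_prod_type,
    Fintype.sum_bool]
  simp +decide [chshMixWeight]
  norm_num

lemma isoPRB1_quarter_eq_sum (x y u v : Bool) :
    isoPRB1 (1 / 4) x y u v =
      ∑ a, ∑ b, chshMixWeight a b * if x = a u ∧ y = b v then 1 else 0 := by
  simp only [← (Equiv.boolArrowEquivProd Bool).symm.sum_comp, Fintype.sum_prod_type,
    Fintype.sum_bool]
  cases x <;> cases y <;> cases u <;> cases v <;>
    simp +decide [chshMixWeight, isoPRB1] <;> norm_num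

lemma isLocal_isoPRB_one_quarter : IsLocal (isoPRB 1 (1 / 4)) := by
  let e := bitsOneFunEquiv.prodCongr bitsOneFunEquiv
  refine ⟨fun fg => chshMixWeight (e fg).1 (e fg).2, fun _ => ?_, ?_, fun x y u v => ?_⟩
  · dsimp only [chshMixWeight]; split_ifs <;> norm_num
  · rw [← e.symm.sum_comp, Fintype.sum_prod_type]
    simpa using sum_chshMixWeight
  · rw [← e.symm.sum_comp, Fintype.sum_prod_type, isoPRB_one_apply, isoPRB1_quarter_eq_sum]
    simp only [e, Equiv.prodCongr_symm, Equiv.prodCongr_apply, Prod.map_fst, Prod.map_snd,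
      Equiv.apply_symm_apply, detBox_one_apply, bitsOneFunEquiv_symm_apply]
    rfl

noncomputable def chshLoss : Box 1 →ₗ[ℝ] ℝ where
  toFun P := ∑ q : (Bits 1 × Bits 1) × (Bits 1 × Bits 1) with
    (q.1.1 0 ^^ q.1.2 0) ≠ (q.2.1 0 && q.2.2 0), P q.1.1 q.1.2 q.2.1 q.2.2
  map_add' P Q := by simp only [Pi.add_apply, sum_add_distrib]
  map_smul' c P := by simp only [Pi.smul_apply, smul_eq_mul, RingHom.id_apply, mul_sum]

lemma chshLoss_apply (P : Box 1) :
    chshLoss P = ∑ q : (Bits 1 × Bits 1) × (Bits 1 × Bits 1) with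
      (q.1.1 0 ^^ q.1.2 0) ≠ (q.2.1 0 && q.2.2 0), P q.1.1 q.1.2 q.2.1 q.2.2 :=
  rfl

lemma chshLoss_nonneg {P : Box 1} (hP : ∀ x y u v, 0 ≤ P x y u v) : 0 ≤ chshLoss P := by
  rw [chshLoss_apply]
  exact sum_nonneg fun _ _ => hP _ _ _ _

lemma chshLoss_isoPRB_one (ε : ℝ) : chshLoss (isoPRB 1 ε) = 4 * ε := by
  simp only [chshLoss_apply, sum_filter, Fintype.sum_prod_type,
    sum_bits_one, isoPRB_one_apply, isoPRB1]
  norm_num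
  ring

theorem chsh_not_winnable (a b : Bool → Bool) : ∃ u v, (a u ^^ b v) ≠ (u && v) := by
  revert a b
  decide

lemma one_le_chshLoss_detBox (f g : Bits 1 → Bits 1) : 1 ≤ chshLoss (detBox f g) := by
  obtain ⟨u, v, hlose⟩ :=
    chsh_not_winnable (fun b => f (fun _ => b) 0) (fun b => g (fun _ => b) 0)
  have hwin : detBox f g (f fun _ => u) (g fun _ => v) (fun _ => u) (fun _ => v) = 1 := by
    simp [detBox]
  rw [chshLoss_apply]
  calc (1 : ℝ) = detBox f g (f fun _ => u) (g fun _ => v) (fun _ => u) (fun _ => v) := hwin.symm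
    _ ≤ _ := single_le_sum (f := fun q => detBox f g q.1.1 q.1.2 q.2.1 q.2.2)
        (fun q _ => by unfold detBox; split_ifs <;> norm_num)
        (mem_filter.2 ⟨mem_univ ((f fun _ => u, g fun _ => v), (fun _ => u, fun _ => v)), hlose⟩)

lemma IsLocal.le_apply {n : ℕ} {P : Box n} (hP : IsLocal P) (L : Box n →ₗ[ℝ] ℝ) {c : ℝ}
    (hL : ∀ f g, c ≤ L (detBox f g)) : c ≤ L P := by
  obtain ⟨w, hw0, hw1, hPw⟩ := hP
  have hP : P = ∑ fg, w fg • detBox fg.1 fg.2 := by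
    ext x y u v
    simp [hPw, Finset.sum_apply]
  calc c = ∑ fg, w fg * c := by rw [← sum_mul, hw1, one_mul]
    _ ≤ ∑ fg, w fg * L (detBox fg.1 fg.2) :=
        sum_le_sum fun fg _ => mul_le_mul_of_nonneg_left (hL _ _) (hw0 fg)
    _ = L P := by simp [hP, map_sum]

lemma le_chshLoss_of_eq_add {p : ℝ} {P PL PNS : Box 1} (hp0 : 0 ≤ p) (hp1 : p ≤ 1)
    (hPL : IsLocal PL) (hPNS : ∀ x y u v, 0 ≤ PNS x y u v)
    (hP : ∀ x y u v, P x y u v = p * PL x y u v + (1 - p) * PNS x y u v) :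
    p ≤ chshLoss P := by
  have hP' : P = p • PL + (1 - p) • PNS := by
    ext x y u v
    exact hP x y u v
  have hL := hPL.le_apply chshLoss one_le_chshLoss_detBox
  have hNS := chshLoss_nonneg hPNS
  rw [hP', map_add, map_smul, map_smul, smul_eq_mul, smul_eq_mul]
  linarith [mul_le_mul_of_nonneg_left hL hp0, mul_nonneg (sub_nonneg.2 hp1) hNS]

/-- the local part of one isotropic ε-PRB is `4ε`. -/
theorem stmt3 (ε : ℝ) (hε0 : 0 ≤ ε) (hε : ε ≤ 1 / 4) :
    localPart (isoPRB 1 ε) = 4 * ε := by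
  refine IsGreatest.csSup_eq ⟨⟨by linarith, by linarith, isoPRB 1 (1 / 4), isoPRB 1 0,
    isBox_isoPRB_one (by norm_num) (by norm_num), isLocal_isoPRB_one_quarter,
    isBox_isoPRB_one le_rfl zero_le_one, nonSignalling_isoPRB_one 0, isoPRB_one_eq_add ε⟩, ?_⟩
  rintro p ⟨hp0, hp1, PL, PNS, -, hPL, hPNS, -, hP⟩
  exact (le_chshLoss_of_eq_add hp0 hp1 hPL hPNS.1 hP).trans_eq (chshLoss_isoPRB_one ε)
end

section
/- For every ε ∈ [0,1/4], there exists a local bipartite conditional probability distribution P_L on 2-bit alphabets such that P^{2,ε}(x,y|u,v) = 4ε·P_L(x,y|u,v) + (1−4ε)·P^{2,0}(x,y|u,v) for all x,y,u,v ∈ {0,1}², where P^{2,0} is the product of two perfect PRBs (the case ε = 0). -/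
open Finset

set_option maxRecDepth 10000

namespace Stmt4Aux

def tblA0 : List Nat := [64, 128, 16, 32, 224, 176, 4, 196, 84, 100, 164, 244, 8, 168, 76, 236, 1, 81, 145, 161, 49, 241, 69, 21, 213, 229, 117, 181, 25, 185, 93, 253, 2, 162, 70, 230, 74, 138, 26, 42, 234, 186, 14, 206, 94, 110, 174, 254, 19, 179, 87, 247, 11, 91, 155, 171, 59, 251, 79, 31, 223, 239, 127, 191]
def tblB0 : List Nat := [32, 4, 100, 64, 2, 70, 128, 1, 145, 16, 8, 25, 164, 74, 161, 26, 196, 213, 84, 76, 69, 93, 49, 117, 81, 19, 21, 87, 244, 79, 241, 31, 224, 14, 176, 11, 168, 234, 236, 174, 138, 206, 162, 186, 179, 171, 42, 59, 229, 94, 181, 91, 230, 247, 239, 110, 254, 127, 185, 253, 191, 155, 251, 223]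
def tblA1 : List Nat := [0, 0, 160, 160, 10, 10, 170, 170, 0, 0, 160, 160, 10, 10, 170, 170, 68, 68, 228, 228, 78, 78, 238, 238, 68, 68, 228, 228, 78, 78, 238, 238, 17, 17, 177, 177, 27, 27, 187, 187, 17, 17, 177, 177, 27, 27, 187, 187, 85, 85, 245, 245, 95, 95, 255, 255, 85, 85, 245, 245, 95, 95, 255, 255]
def tblB1 : List Nat := [0, 160, 0, 10, 160, 170, 10, 170, 68, 228, 68, 78, 228, 238, 78, 238, 0, 160, 0, 10, 160, 170, 10, 170, 17, 177, 17, 27, 177, 187, 27, 187, 68, 228, 68, 78, 228, 238, 78, 238, 85, 245, 85, 95, 245, 255, 95, 255, 17, 177, 17, 27, 177, 187, 27, 187, 85, 245, 85, 95, 245, 255, 95, 255]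

def bEnc (u : Bits 2) : ℕ := (cond (u 0) 1 0) + 2 * (cond (u 1) 1 0)

def fOf (a : ℕ) : Bits 2 → Bits 2 := fun u i => Nat.testBit (a / 4 ^ bEnc u) i.val

abbrev FG := (Bits 2 → Bits 2) × (Bits 2 → Bits 2)

def strat0 (k : Fin 64) : FG := (fOf (tblA0.getD k.val 0), fOf (tblB0.getD k.val 0))
def strat1 (k : Fin 64) : FG := (fOf (tblA1.getD k.val 0), fOf (tblB1.getD k.val 0))

def relP (x y u v : Bits 2) (i : Fin 2) : Prop := xor (x i) (y i) = (u i && v i)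

instance (x y u v : Bits 2) (i : Fin 2) : Decidable (relP x y u v i) :=
  instDecidableEqBool _ _

def cnt0 (x y u v : Bits 2) : ℕ :=
  4 * ((if relP x y u v 0 then 1 else 0) + (if relP x y u v 1 then 1 else 0))
def cnt1 (x y u v : Bits 2) : ℕ :=
  (if relP x y u v 0 then 3 else 1) * (if relP x y u v 1 then 3 else 1)

lemma count0 : ∀ x y u v : Bits 2,
    (∑ k : Fin 64, if x = (strat0 k).1 u ∧ y = (strat0 k).2 v then 1 else 0) = cnt0 x y u v := by
  decide

lemma count1 : ∀ x y u v : Bits 2,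
    (∑ k : Fin 64, if x = (strat1 k).1 u ∧ y = (strat1 k).2 v then 1 else 0) = cnt1 x y u v := by
  decide

end Stmt4Aux

namespace Stmt4Aux

noncomputable def PLbox (ε : ℝ) : Box 2 := fun x y u v =>
  ((1 - 4 * ε) / 64) * (cnt0 x y u v : ℝ) + (ε / 16) * (cnt1 x y u v : ℝ)

noncomputable def wgt (ε : ℝ) : FG → ℝ := fun fg =>
  (∑ k : Fin 64, ((1 - 4 * ε) / 64) * (if fg = strat0 k then 1 else 0)) +
  (∑ k : Fin 64, (ε / 16) * (if fg = strat1 k then 1 else 0))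

lemma detBox_cast (fg : FG) (x y u v : Bits 2) :
    detBox fg.1 fg.2 x y u v = ((if x = fg.1 u ∧ y = fg.2 v then 1 else 0 : ℕ) : ℝ) := by
  by_cases h : x = fg.1 u ∧ y = fg.2 v <;> simp [detBox, h]

lemma sum_single (c : ℝ) (s : FG) (F : FG → ℝ) :
    (∑ fg : FG, (c * if fg = s then 1 else 0) * F fg) = c * F s := by
  rw [Finset.sum_eq_single s]
  · simp
  · intro b _ hb; simp [hb]
  · intro h; exact absurd (Finset.mem_univ s) h

lemma rep (ε : ℝ) (x y u v : Bits 2) :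
    (∑ fg : FG, wgt ε fg * detBox fg.1 fg.2 x y u v) = PLbox ε x y u v := by
  have split : (∑ fg : FG, wgt ε fg * detBox fg.1 fg.2 x y u v)
      = (∑ fg : FG, (∑ k : Fin 64, ((1 - 4 * ε) / 64) * (if fg = strat0 k then 1 else 0))
            * detBox fg.1 fg.2 x y u v)
      + (∑ fg : FG, (∑ k : Fin 64, (ε / 16) * (if fg = strat1 k then 1 else 0))
            * detBox fg.1 fg.2 x y u v) := by
    rw [← Finset.sum_add_distrib]
    refine Finset.sum_congr rfl fun fg _ => ?_
    rw [wgt, add_mul]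
  have key : ∀ (c : ℝ) (st : Fin 64 → FG),
      (∑ fg : FG, (∑ k : Fin 64, c * (if fg = st k then 1 else 0)) * detBox fg.1 fg.2 x y u v)
      = c * ∑ k : Fin 64, ((if x = (st k).1 u ∧ y = (st k).2 v then 1 else 0 : ℕ) : ℝ) := by
    intro c st
    have h2 : ∀ fg : FG,
        (∑ k : Fin 64, c * (if fg = st k then 1 else 0)) * detBox fg.1 fg.2 x y u v
        = ∑ k : Fin 64, (c * if fg = st k then 1 else 0) * detBox fg.1 fg.2 x y u v := by
      intro fg; rw [Finset.sum_mul]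
    rw [Finset.sum_congr rfl fun fg _ => h2 fg, Finset.sum_comm, Finset.mul_sum]
    refine Finset.sum_congr rfl fun k _ => ?_
    rw [sum_single c (st k) (fun fg => detBox fg.1 fg.2 x y u v), detBox_cast]
  rw [split, key, key, ← Nat.cast_sum, ← Nat.cast_sum, count0, count1, PLbox]

lemma wgt_nonneg (ε : ℝ) (hε0 : 0 ≤ ε) (hε : ε ≤ 1 / 4) (fg : FG) : 0 ≤ wgt ε fg := by
  refine add_nonneg ?_ ?_ <;>
    refine Finset.sum_nonneg fun k _ => mul_nonneg (by linarith) ?_ <;>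
    · split <;> norm_num

lemma blockSum (c : ℝ) (st : Fin 64 → FG) :
    (∑ fg : FG, ∑ k : Fin 64, c * (if fg = st k then 1 else 0)) = 64 * c := by
  rw [Finset.sum_comm]
  have h1 : ∀ k : Fin 64, (∑ fg : FG, c * (if fg = st k then 1 else 0)) = c := by
    intro k
    rw [← Finset.mul_sum, Finset.sum_ite_eq' Finset.univ (st k) (fun _ => (1 : ℝ))]
    simp
  rw [Finset.sum_congr rfl fun k _ => h1 k, Finset.sum_const]
  simp

lemma wgt_sum (ε : ℝ) : (∑ fg : FG, wgt ε fg) = 1 := by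
  unfold wgt
  rw [Finset.sum_add_distrib, blockSum, blockSum]
  ring

lemma detBox_sum (f g : Bits 2 → Bits 2) (u v : Bits 2) :
    (∑ x : Bits 2, ∑ y : Bits 2, detBox f g x y u v) = 1 := by
  have h1 : ∀ x : Bits 2, (∑ y : Bits 2, detBox f g x y u v)
      = if x = f u then 1 else 0 := by
    intro x
    by_cases h : x = f u
    · simp [detBox, h, Finset.sum_ite_eq' Finset.univ (g v) (fun _ => (1 : ℝ))]
    · simp [detBox, h]
  rw [Finset.sum_congr rfl fun x _ => h1 x,
    Finset.sum_ite_eq' Finset.univ (f u) (fun _ => (1 : ℝ))]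
  simp

lemma PLbox_isLocal (ε : ℝ) (hε0 : 0 ≤ ε) (hε : ε ≤ 1 / 4) : IsLocal (PLbox ε) :=
  ⟨wgt ε, wgt_nonneg ε hε0 hε, wgt_sum ε, fun x y u v => (rep ε x y u v).symm⟩

lemma PLbox_isBox (ε : ℝ) (hε0 : 0 ≤ ε) (hε : ε ≤ 1 / 4) : IsBox (PLbox ε) := by
  constructor
  · intro x y u v
    exact add_nonneg (mul_nonneg (by linarith) (Nat.cast_nonneg _))
      (mul_nonneg (by linarith) (Nat.cast_nonneg _))
  · intro u v
    calc (∑ x : Bits 2, ∑ y : Bits 2, PLbox ε x y u v)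
        = ∑ x : Bits 2, ∑ y : Bits 2, ∑ fg : FG, wgt ε fg * detBox fg.1 fg.2 x y u v :=
          Finset.sum_congr rfl fun x _ => Finset.sum_congr rfl fun y _ => (rep ε x y u v).symm
      _ = ∑ fg : FG, ∑ x : Bits 2, ∑ y : Bits 2, wgt ε fg * detBox fg.1 fg.2 x y u v := by
          rw [show (∑ x : Bits 2, ∑ y : Bits 2, ∑ fg : FG, wgt ε fg * detBox fg.1 fg.2 x y u v)
              = ∑ x : Bits 2, ∑ fg : FG, ∑ y : Bits 2, wgt ε fg * detBox fg.1 fg.2 x y u v from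
            Finset.sum_congr rfl fun x _ => Finset.sum_comm]
          exact Finset.sum_comm
      _ = ∑ fg : FG, wgt ε fg := by
          refine Finset.sum_congr rfl fun fg _ => ?_
          simp only [← Finset.mul_sum]
          rw [detBox_sum fg.1 fg.2 u v, mul_one]
      _ = 1 := wgt_sum ε

end Stmt4Aux

/-- two isotropic ε-PRBs decompose as `4ε` times a local box plus
`(1-4ε)` times two perfect PRBs. -/
theorem stmt4 (ε : ℝ) (hε0 : 0 ≤ ε) (hε : ε ≤ 1 / 4) :
    ∃ PL : Box 2, IsBox PL ∧ IsLocal PL ∧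
      ∀ x y u v, isoPRB 2 ε x y u v =
        4 * ε * PL x y u v + (1 - 4 * ε) * isoPRB 2 0 x y u v := by
  refine ⟨Stmt4Aux.PLbox ε, Stmt4Aux.PLbox_isBox ε hε0 hε,
    Stmt4Aux.PLbox_isLocal ε hε0 hε, fun x y u v => ?_⟩
  have l : isoPRB 2 ε x y u v
      = isoPRB1 ε (x 0) (y 0) (u 0) (v 0) * isoPRB1 ε (x 1) (y 1) (u 1) (v 1) :=
    Fin.prod_univ_two _
  have l0 : isoPRB 2 0 x y u v
      = isoPRB1 0 (x 0) (y 0) (u 0) (v 0) * isoPRB1 0 (x 1) (y 1) (u 1) (v 1) :=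
    Fin.prod_univ_two _
  rw [l, l0]
  unfold Stmt4Aux.PLbox Stmt4Aux.cnt0 Stmt4Aux.cnt1 Stmt4Aux.relP isoPRB1
  by_cases h0 : xor (x 0) (y 0) = (u 0 && v 0) <;>
    by_cases h1 : xor (x 1) (y 1) = (u 1 && v 1) <;>
    simp only [h0, h1, if_true, if_false, if_pos, if_neg, not_false_iff] <;>
    push_cast <;> ring
end

section
/- For all functions f, g : {0,1}³ → {0,1}³, there exist inputs u, v ∈ {0,1}³ such that the number of indices i ∈ {1,2,3} with f(u)_i ⊕ g(v)_i ≠ u_i·v_i is at least 2. In other words, every local deterministic strategy for three PRBs loses at least two of the three parallel rounds of the CHSH game on some input pair. -/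
open Finset

/-- every local deterministic strategy for three parallel CHSH games loses
at least two rounds on some input pair. -/
theorem stmt6 (f g : Bits 3 → Bits 3) :
    ∃ u v : Bits 3,
      2 ≤ (Finset.univ.filter
        fun i : Fin 3 => xor (f u i) (g v i) ≠ (u i && v i)).card := by
  by_contra hcon
  push_neg at hcon
  set u₁ : Bits 3 := fun _ => false with hu₁
  set u₂ : Bits 3 := fun _ => true with hu₂
  set v : Bits 3 := fun i => xor (f u₂ i) (!(f u₁ i)) with hv
  have h1 := hcon u₁ v
  have h2 := hcon u₂ v
  set A : Finset (Fin 3) := Finset.univ.filter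
    (fun i : Fin 3 => xor (f u₁ i) (g v i) ≠ (u₁ i && v i)) with hA
  set B : Finset (Fin 3) := Finset.univ.filter
    (fun i : Fin 3 => xor (f u₂ i) (g v i) ≠ (u₂ i && v i)) with hB
  have hunion : A ∪ B = Finset.univ := by
    apply Finset.eq_univ_of_forall
    intro i
    simp only [hA, hB, Finset.mem_union, Finset.mem_filter, Finset.mem_univ, true_and,
      hu₁, hu₂, hv, Bool.false_and, Bool.true_and]
    cases hfa : f u₁ i <;> cases hfb : f u₂ i <;> cases hg : g v i <;> simp [hfa, hfb]
  have h3 : (3 : ℕ) ≤ A.card + B.card := by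
    calc (3 : ℕ) = (Finset.univ : Finset (Fin 3)).card := by simp
    _ = (A ∪ B).card := by rw [hunion]
    _ ≤ A.card + B.card := Finset.card_union_le A B
  omega
end

section
/- Let ε ∈ [0,1/4], let P_ld be a local deterministic bipartite conditional probability distribution on 3-bit alphabets, and let p ≥ 0 be such that p·P_ld(x,y|u,v) ≤ P^{3,ε}(x,y|u,v) for all x,y,u,v ∈ {0,1}³. Then p ≤ (ε/2)²·(1/2 − ε/2). -/
open Finset

/-! A deterministic strategy for `n ≥ 3` parallel CHSH games loses at least two coordinates on
some pair of inputs. If it loses two coordinates when Bob's input is all-zero, we are done.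
Otherwise, for every input of Alice at most one coordinate disagrees with Bob's all-zero answer;
choosing Alice's input `w` as the negation of the difference of Bob's all-one and all-zero answers
makes every agreeing coordinate lost on `(w, 1)`. Each lost coordinate contributes a factor `ε/2`
to the isotropic box, every other one at most `(1 - ε)/2`. -/

section CHSH

variable {n : ℕ}

def ChshLost (x y u v : Bits n) (i : Fin n) : Prop :=
  xor (x i) (y i) ≠ (u i && v i)

lemma chshLost_of_eq {x y₀ y₁ : Bits n} {i : Fin n} (h : x i = y₀ i) :
    ChshLost x y₁ (fun k => !xor (y₁ k) (y₀ k)) (fun _ => true) i := by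
  simp only [ChshLost, h, Bool.and_true]
  cases y₀ i <;> cases y₁ i <;> decide

theorem exists_two_chshLost (hn : 3 ≤ n) (f g : Bits n → Bits n) :
    ∃ u v : Bits n, ∃ i j : Fin n, i ≠ j ∧
      ChshLost (f u) (g v) u v i ∧ ChshLost (f u) (g v) u v j := by
  by_contra! H
  set w : Bits n := fun k => !xor (g (fun _ => true) k) (g (fun _ => false) k)
  set S := univ.filter fun i => f w i ≠ g (fun _ => false) i
  have hS : S.card ≤ 1 := by
    refine card_le_one.2 fun i hi j hj => ?_
    by_contra hij
    simp only [S, mem_filter, mem_univ, true_and] at hi hj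
    exact H w (fun _ => false) i j hij (by simpa [ChshLost] using hi)
      (by simpa [ChshLost] using hj)
  have hSc : 1 < Sᶜ.card := by
    rw [card_compl, Fintype.card_fin]
    omega
  obtain ⟨i, hi, j, hj, hij⟩ := one_lt_card.1 hSc
  simp only [S, mem_compl, mem_filter, mem_univ, true_and, not_not] at hi hj
  exact H w (fun _ => true) i j hij (chshLost_of_eq hi) (chshLost_of_eq hj)

end CHSH

section IsoPRB

variable {ε : ℝ}

lemma isoPRB1_nonneg (hε0 : 0 ≤ ε) (hε1 : ε ≤ 1) (x y u v : Bool) : 0 ≤ isoPRB1 ε x y u v := by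
  unfold isoPRB1
  split_ifs <;> linarith

lemma isoPRB1_le (hε : ε ≤ 1 / 2) (x y u v : Bool) : isoPRB1 ε x y u v ≤ (1 - ε) / 2 := by
  unfold isoPRB1
  split_ifs <;> linarith

lemma isoPRB1_of_ne {x y u v : Bool} (h : xor x y ≠ (u && v)) : isoPRB1 ε x y u v = ε / 2 :=
  if_neg h

theorem isoPRB_le_of_chshLost {n : ℕ} (hε0 : 0 ≤ ε) (hε : ε ≤ 1 / 2) {x y u v : Bits n}
    {i j : Fin n} (hij : i ≠ j) (hi : ChshLost x y u v i) (hj : ChshLost x y u v j) :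
    isoPRB n ε x y u v ≤ (ε / 2) ^ 2 * ((1 - ε) / 2) ^ (n - 2) := by
  set F : Fin n → ℝ := fun k => isoPRB1 ε (x k) (y k) (u k) (v k)
  have hj' : j ∈ univ.erase i := mem_erase.2 ⟨hij.symm, mem_univ j⟩
  have hsplit : isoPRB n ε x y u v = F i * F j * ∏ k ∈ (univ.erase i).erase j, F k := by
    rw [mul_assoc, mul_prod_erase _ _ hj', mul_prod_erase _ _ (mem_univ i)]
    rfl
  have hrest : ∏ k ∈ (univ.erase i).erase j, F k ≤ ((1 - ε) / 2) ^ (n - 2) := by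
    calc ∏ k ∈ (univ.erase i).erase j, F k
        ≤ ∏ _k ∈ (univ.erase i).erase j, (1 - ε) / 2 :=
          prod_le_prod (fun k _ => isoPRB1_nonneg hε0 (by linarith) ..)
            (fun k _ => isoPRB1_le hε ..)
      _ = ((1 - ε) / 2) ^ (n - 2) := by
          rw [prod_const, card_erase_of_mem hj', card_erase_of_mem (mem_univ i), card_univ,
            Fintype.card_fin]
          rfl
  rw [hsplit, show F i = ε / 2 from isoPRB1_of_ne hi, show F j = ε / 2 from isoPRB1_of_ne hj,
    ← sq]
  gcongr

end IsoPRB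

theorem detBox_weight_le_of_le_isoPRB {n : ℕ} (hn : 3 ≤ n) {ε : ℝ} (hε0 : 0 ≤ ε)
    (hε : ε ≤ 1 / 2) (f g : Bits n → Bits n) {p : ℝ}
    (h : ∀ x y u v, p * detBox f g x y u v ≤ isoPRB n ε x y u v) :
    p ≤ (ε / 2) ^ 2 * ((1 - ε) / 2) ^ (n - 2) := by
  obtain ⟨u, v, i, j, hij, hi, hj⟩ := exists_two_chshLost hn f g
  calc p = p * detBox f g (f u) (g v) u v := by simp [detBox]
    _ ≤ isoPRB n ε (f u) (g v) u v := h _ _ _ _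
    _ ≤ _ := isoPRB_le_of_chshLost hε0 hε hij hi hj

theorem stmt7_general (ε : ℝ) (hε0 : 0 ≤ ε) (hε : ε ≤ 1 / 4)
    (Pld : Box 3) (hld : IsLocalDet Pld) (p : ℝ)
    (h : ∀ x y u v, p * Pld x y u v ≤ isoPRB 3 ε x y u v) :
    p ≤ (ε / 2) ^ 2 * (1 / 2 - ε / 2) := by
  obtain ⟨f, g, rfl⟩ := hld
  have := detBox_weight_le_of_le_isoPRB le_rfl hε0 (by linarith) f g h
  linarith

/-- any local deterministic strategy has weight at most
`(ε/2)²·(1/2 − ε/2)` in three isotropic ε-PRBs. -/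
theorem stmt7 (ε : ℝ) (hε0 : 0 ≤ ε) (hε : ε ≤ 1 / 4)
    (Pld : Box 3) (hld : IsLocalDet Pld) (p : ℝ) (hp : 0 ≤ p)
    (h : ∀ x y u v, p * Pld x y u v ≤ isoPRB 3 ε x y u v) :
    p ≤ (ε / 2) ^ 2 * (1 / 2 - ε / 2) :=
  stmt7_general ε hε0 hε Pld hld p h
end

section
/- For every n ≥ 1 and all functions f, g : {0,1}ⁿ → {0,1}ⁿ, there exist inputs u, v ∈ {0,1}ⁿ such that the number of indices i ∈ {1,…,n} with f(u)_i ⊕ g(v)_i ≠ u_i·v_i is at least n/2 (equivalently, at least ⌈n/2⌉). In other words, every local deterministic strategy for n PRBs loses at least half of the n parallel rounds of the CHSH game on some input pair. -/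
open Finset

/-- every local deterministic strategy for n parallel CHSH games loses
at least ⌈n/2⌉ rounds on some input pair. -/
theorem stmt9 (n : ℕ) (hn : 1 ≤ n) (f g : Bits n → Bits n) :
    ∃ u v : Bits n,
      (n + 1) / 2 ≤ (Finset.univ.filter
        fun i : Fin n => xor (f u i) (g v i) ≠ (u i && v i)).card := by
  classical
  set u0 : Bits n := fun _ => false with hu0
  set u1 : Bits n := fun _ => true with hu1
  set v : Bits n := fun i => !(xor (f u0 i) (f u1 i)) with hv
  set S1 := Finset.univ.filter
      (fun i : Fin n => xor (f u0 i) (g v i) ≠ (u0 i && v i)) with hS1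
  set S2 := Finset.univ.filter
      (fun i : Fin n => xor (f u1 i) (g v i) ≠ (u1 i && v i)) with hS2
  have hcomp : S2 = S1ᶜ := by
    ext i
    simp only [hS1, hS2, Finset.mem_compl, Finset.mem_filter, Finset.mem_univ, true_and]
    have hv' : v i = !(xor (f u0 i) (f u1 i)) := rfl
    have h0 : u0 i = false := rfl
    have h1 : u1 i = true := rfl
    rw [h0, h1, hv']
    cases f u0 i <;> cases f u1 i <;> cases g v i <;> simp
  have hsum : S1.card + S2.card = n := by
    rw [hcomp]
    have := Finset.card_add_card_compl S1
    simpa [Fintype.card_fin] using this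
  rcases le_or_gt ((n + 1) / 2) S1.card with h | h
  · exact ⟨u0, v, h⟩
  · exact ⟨u1, v, show (n + 1) / 2 ≤ S2.card by omega⟩
end

section
/- For every n ≥ 1, there exist constants c₁ > 0 and c₂ > 0 such that for all ε ∈ [0,1/4], c₁·ε^{⌈n/2⌉} ≤ localPart(P^{n,ε}) ≤ c₂·ε^{⌈n/2⌉}, where localPart(P^{n,ε}) denotes the local part of the system of n isotropic ε-PRBs. That is, the local part of n isotropic ε-PRBs is of order Θ(ε^{⌈n/2⌉}). -/
open Finset

/-!
If `P = p • P_L + (1 - p) • P_NS` with `P_L = ∑ w(f, g) • detBox f g`, then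
`P(f u, g v | u, v) ≥ p · w(f, g)` at every input `(u, v)`. Every deterministic strategy loses at
least `⌈n/2⌉` of the `n` CHSH games on some input (Bob plays all-`0` or all-`1`, and Alice's input
is chosen so that the games lost against these two inputs are complementary), and there the
isotropic box has weight at most `ε ^ ⌈n/2⌉`; summing over the finitely many strategies gives the
upper bound. Conversely, pairing the games `(2j, 2j+1)` gives a strategy that loses at most one game
of each pair, so `P^{n,ε} ≥ (3/8)^n ε^⌈n/2⌉ · detBox` pointwise, and the remainder, rescaled, is a
non-signalling box.
-/

section Boxes

variable {n : ℕ}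

@[simp]
lemma detBox_apply_self (f g : Bits n → Bits n) (u v : Bits n) :
    detBox f g (f u) (g v) u v = 1 := by
  simp [detBox]

lemma detBox_nonneg (f g : Bits n → Bits n) (x y u v : Bits n) : 0 ≤ detBox f g x y u v := by
  unfold detBox; split <;> norm_num

lemma sum_detBox_left (f g : Bits n → Bits n) (y u v : Bits n) :
    ∑ x, detBox f g x y u v = if y = g v then 1 else 0 := by
  simp [detBox, ite_and]

lemma sum_detBox_right (f g : Bits n → Bits n) (x u v : Bits n) :
    ∑ y, detBox f g x y u v = if x = f u then 1 else 0 := by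
  simp [detBox, ite_and]

lemma isBox_detBox (f g : Bits n → Bits n) : IsBox (detBox f g) :=
  ⟨detBox_nonneg f g, fun u v => by simp [sum_detBox_right]⟩

lemma nonSignalling_detBox (f g : Bits n → Bits n) : NonSignalling (detBox f g) :=
  ⟨fun y v u u' => by rw [sum_detBox_left, sum_detBox_left],
    fun x u v v' => by rw [sum_detBox_right, sum_detBox_right]⟩

lemma isLocal_detBox (f g : Bits n → Bits n) : IsLocal (detBox f g) := by
  classical
  refine ⟨Pi.single (f, g) 1, fun fg => ?_, by simp, fun x y u v => ?_⟩
  · by_cases h : fg = (f, g) <;> simp [h]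
  · simp [Pi.single_apply, ite_mul]

lemma NonSignalling.mul_add_mul {P Q : Box n} (hP : NonSignalling P) (hQ : NonSignalling Q)
    (a b : ℝ) : NonSignalling (fun x y u v => a * P x y u v + b * Q x y u v) := by
  constructor
  · intro y v u u'
    simp only [sum_add_distrib, ← mul_sum, hP.1 y v u u', hQ.1 y v u u']
  · intro x u v v'
    simp only [sum_add_distrib, ← mul_sum, hP.2 x u v v', hQ.2 x u v v']

/-- The weights `p` over which `localPart P` takes the supremum. -/
def IsLocalWeight (P : Box n) (p : ℝ) : Prop :=
  0 ≤ p ∧ p ≤ 1 ∧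
    ∃ PL PNS : Box n, IsBox PL ∧ IsLocal PL ∧ IsBox PNS ∧ NonSignalling PNS ∧
      ∀ x y u v, P x y u v = p * PL x y u v + (1 - p) * PNS x y u v

lemma IsLocalWeight.mul_weight_le {P : Box n} {p : ℝ} (hp : IsLocalWeight P p) :
    ∃ w : (Bits n → Bits n) × (Bits n → Bits n) → ℝ, ∑ fg, w fg = 1 ∧
      ∀ f g u v, p * w (f, g) ≤ P (f u) (g v) u v := by
  obtain ⟨hp0, hp1, PL, PNS, -, ⟨w, hw0, hw1, hPL⟩, hPNS, -, hP⟩ := hp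
  refine ⟨w, hw1, fun f g u v => ?_⟩
  have hw : w (f, g) ≤ PL (f u) (g v) u v := by
    rw [hPL]
    simpa using single_le_sum
      (fun fg _ => mul_nonneg (hw0 fg) (detBox_nonneg fg.1 fg.2 (f u) (g v) u v)) (mem_univ (f, g))
  have hrest : 0 ≤ (1 - p) * PNS (f u) (g v) u v := mul_nonneg (by linarith) (hPNS.1 _ _ _ _)
  calc p * w (f, g) ≤ p * PL (f u) (g v) u v := mul_le_mul_of_nonneg_left hw hp0
    _ ≤ P (f u) (g v) u v := by rw [hP]; linarith

lemma localPart_le_card_mul {P : Box n} {b : ℝ} (hb0 : 0 ≤ b)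
    (hb : ∀ f g : Bits n → Bits n, ∃ u v, P (f u) (g v) u v ≤ b) :
    localPart P ≤ Fintype.card ((Bits n → Bits n) × (Bits n → Bits n)) * b := by
  refine Real.sSup_le (fun p hp => ?_) (by positivity)
  obtain ⟨w, hw1, hwP⟩ := IsLocalWeight.mul_weight_le hp
  have hpw : ∀ fg, p * w fg ≤ b := fun ⟨f, g⟩ =>
    let ⟨u, v, huv⟩ := hb f g
    (hwP f g u v).trans huv
  calc p = ∑ fg, p * w fg := by rw [← mul_sum, hw1, mul_one]
    _ ≤ ∑ _fg, b := sum_le_sum fun fg _ => hpw fg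
    _ = _ := by rw [sum_const, nsmul_eq_mul, card_univ]

lemma isLocalWeight_of_mul_detBox_le {P : Box n} (hP : IsBox P) (hPns : NonSignalling P)
    {p : ℝ} (hp0 : 0 ≤ p) (hp1 : p < 1) (f g : Bits n → Bits n)
    (hle : ∀ x y u v, p * detBox f g x y u v ≤ P x y u v) : IsLocalWeight P p := by
  have hq : 1 - p ≠ 0 := by linarith
  have hc0 : 0 ≤ (1 - p)⁻¹ := inv_nonneg.mpr (by linarith)
  refine ⟨hp0, hp1.le, detBox f g,
    fun x y u v => (1 - p)⁻¹ * P x y u v + -(p * (1 - p)⁻¹) * detBox f g x y u v,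
    isBox_detBox f g, isLocal_detBox f g, ⟨fun x y u v => ?_, fun u v => ?_⟩,
    hPns.mul_add_mul (nonSignalling_detBox f g) _ _, fun x y u v => ?_⟩
  · linarith [mul_nonneg hc0 (sub_nonneg.2 (hle x y u v))]
  · simp only [sum_add_distrib, ← mul_sum, hP.2 u v, (isBox_detBox f g).2 u v]
    field_simp
    ring
  · field_simp
    ring

lemma le_localPart_of_mul_detBox_le {P : Box n} (hP : IsBox P) (hPns : NonSignalling P)
    {p : ℝ} (hp0 : 0 ≤ p) (hp1 : p < 1) (f g : Bits n → Bits n)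
    (hle : ∀ x y u v, p * detBox f g x y u v ≤ P x y u v) : p ≤ localPart P :=
  le_csSup ⟨1, fun _ hq => hq.2.1⟩ (isLocalWeight_of_mul_detBox_le hP hPns hp0 hp1 f g hle)

end Boxes

section IsotropicPRB

variable {n : ℕ}

def chshLosses (x y u v : Bits n) : Finset (Fin n) :=
  {i | xor (x i) (y i) ≠ (u i && v i)}

lemma isoPRB1_nonneg_s10 {ε : ℝ} (hε0 : 0 ≤ ε) (hε1 : ε ≤ 1) (a b s t : Bool) :
    0 ≤ isoPRB1 ε a b s t := by
  unfold isoPRB1; split <;> linarith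

lemma sum_isoPRB1_left (ε : ℝ) (b s t : Bool) : ∑ a, isoPRB1 ε a b s t = 1 / 2 := by
  cases b <;> cases s <;> cases t <;> simp [isoPRB1] <;> ring

lemma sum_isoPRB1_right (ε : ℝ) (a s t : Bool) : ∑ b, isoPRB1 ε a b s t = 1 / 2 := by
  cases a <;> cases s <;> cases t <;> simp [isoPRB1] <;> ring

lemma sum_isoPRB_left (ε : ℝ) (y u v : Bits n) : ∑ x, isoPRB n ε x y u v = (1 / 2) ^ n := by
  simp only [isoPRB, ← Fintype.prod_sum (fun i a => isoPRB1 ε a (y i) (u i) (v i)),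
    sum_isoPRB1_left, prod_const, card_univ, Fintype.card_fin]

lemma sum_isoPRB_right (ε : ℝ) (x u v : Bits n) : ∑ y, isoPRB n ε x y u v = (1 / 2) ^ n := by
  simp only [isoPRB, ← Fintype.prod_sum (fun i b => isoPRB1 ε (x i) b (u i) (v i)),
    sum_isoPRB1_right, prod_const, card_univ, Fintype.card_fin]

lemma isBox_isoPRB {ε : ℝ} (hε0 : 0 ≤ ε) (hε1 : ε ≤ 1) : IsBox (isoPRB n ε) := by
  refine ⟨fun x y u v => prod_nonneg fun i _ => isoPRB1_nonneg_s10 hε0 hε1 _ _ _ _, fun u v => ?_⟩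
  simp only [sum_isoPRB_right, sum_const, card_univ, Fintype.card_pi, Fintype.card_bool,
    prod_const, Fintype.card_fin, nsmul_eq_mul]
  push_cast
  rw [← mul_pow]
  norm_num

lemma nonSignalling_isoPRB (ε : ℝ) : NonSignalling (isoPRB n ε) :=
  ⟨fun y v u u' => by rw [sum_isoPRB_left, sum_isoPRB_left],
    fun x u v v' => by rw [sum_isoPRB_right, sum_isoPRB_right]⟩

lemma isoPRB_le_pow_card_chshLosses {ε : ℝ} (hε0 : 0 ≤ ε) (hε1 : ε ≤ 1) (x y u v : Bits n) :
    isoPRB n ε x y u v ≤ ε ^ #(chshLosses x y u v) := by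
  rw [← prod_const, ← Fintype.prod_ite_mem]
  refine prod_le_prod (fun i _ => isoPRB1_nonneg_s10 hε0 hε1 _ _ _ _) fun i _ => ?_
  by_cases h : i ∈ chshLosses x y u v <;>
    simp_all [chshLosses, isoPRB1]
  linarith

lemma pow_mul_pow_card_chshLosses_le_isoPRB {ε : ℝ} (hε0 : 0 ≤ ε) (hε4 : ε ≤ 1 / 4)
    (x y u v : Bits n) : (3 / 8) ^ n * ε ^ #(chshLosses x y u v) ≤ isoPRB n ε x y u v := by
  rw [← prod_const, ← Fintype.prod_ite_mem, ← Fin.prod_const, ← prod_mul_distrib]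
  refine prod_le_prod (fun i _ => by positivity) fun i _ => ?_
  by_cases h : i ∈ chshLosses x y u v <;>
    simp_all [chshLosses, isoPRB1] <;> linarith

end IsotropicPRB

section Strategies

variable {n : ℕ}

lemma exists_le_card_chshLosses (f g : Bits n → Bits n) :
    ∃ u v, (n + 1) / 2 ≤ #(chshLosses (f u) (g v) u v) := by
  set v₀ : Bits n := fun _ => false
  set v₁ : Bits n := fun _ => true
  set u : Bits n := fun i => !xor (g v₀ i) (g v₁ i)
  have hcompl : chshLosses (f u) (g v₀) u v₀ = (chshLosses (f u) (g v₁) u v₁)ᶜ := by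
    ext i
    simp only [chshLosses, mem_filter, mem_univ, true_and, mem_compl, u, v₀, v₁]
    cases f u i <;> cases g v₀ i <;> cases g v₁ i <;> simp
  have hcard := card_add_card_compl (chshLosses (f u) (g v₁) u v₁)
  rw [← hcompl, Fintype.card_fin] at hcard
  by_cases h : (n + 1) / 2 ≤ #(chshLosses (f u) (g v₁) u v₁)
  · exact ⟨u, v₁, h⟩
  · exact ⟨u, v₀, by omega⟩

def bitAt (u : Bits n) (k : ℕ) : Bool :=
  if h : k < n then u ⟨k, h⟩ else false

lemma bitAt_val (u : Bits n) (i : Fin n) : bitAt u i = u i := by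
  simp [bitAt]

-- Games `2j` and `2j + 1` are played as a pair.
def pairingA (u : Bits n) : Bits n :=
  fun i => if i.val % 2 = 1 then bitAt u (i - 1) && u i else false

def pairingB (v : Bits n) : Bits n :=
  fun i => if i.val % 2 = 0 then v i && !bitAt v (i + 1) else false

/-- If Bob loses game `2j`, then `v (2j) = 1` and `v (2j+1) = u (2j)`, so Alice wins game `2j+1`. -/
lemma not_mem_chshLosses_pairing_of_mem {u v : Bits n} {i j : Fin n} (hi : i.val % 2 = 0)
    (hj : j.val = i.val + 1) (hlost : i ∈ chshLosses (pairingA u) (pairingB v) u v) :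
    j ∉ chshLosses (pairingA u) (pairingB v) u v := by
  have hj' : j.val - 1 = i.val := by omega
  have hpi : pairingA u i = false ∧ pairingB v i = (v i && !v j) := by
    simp [pairingA, pairingB, hi, ← hj, bitAt_val]
  have hpj : pairingA u j = (u i && u j) ∧ pairingB v j = false := by
    simp [pairingA, pairingB, show j.val % 2 = 1 by omega, hj', bitAt_val]
  simp only [chshLosses, mem_filter, mem_univ, true_and, hpi, hpj] at hlost ⊢
  revert hlost
  generalize u i = a, u j = b, v i = c, v j = d
  revert a b c d
  decide

lemma card_chshLosses_pairing_le (u v : Bits n) :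
    #(chshLosses (pairingA u) (pairingB v) u v) ≤ (n + 1) / 2 := by
  calc #(chshLosses (pairingA u) (pairingB v) u v) ≤ #(range ((n + 1) / 2)) := by
        refine card_le_card_of_injOn (fun i => i.val / 2) (fun i _ => ?_) fun i hi j hj hij => ?_
        · simp only [coe_range, Set.mem_Iio]
          omega
        · by_contra hne
          have hne' : i.val ≠ j.val := fun h => hne (Fin.ext h)
          simp only at hij
          rcases (by omega : (i.val % 2 = 0 ∧ j.val = i.val + 1) ∨
              (j.val % 2 = 0 ∧ i.val = j.val + 1)) with ⟨h2, hij'⟩ | ⟨h2, hji'⟩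
          · exact not_mem_chshLosses_pairing_of_mem h2 hij' hi hj
          · exact not_mem_chshLosses_pairing_of_mem h2 hji' hj hi
    _ = (n + 1) / 2 := card_range _

end Strategies

theorem localPart_isoPRB_le (n : ℕ) {ε : ℝ} (hε0 : 0 ≤ ε) (hε4 : ε ≤ 1 / 4) :
    localPart (isoPRB n ε) ≤
      Fintype.card ((Bits n → Bits n) × (Bits n → Bits n)) * ε ^ ((n + 1) / 2) := by
  refine localPart_le_card_mul (by positivity) fun f g => ?_
  obtain ⟨u, v, hloss⟩ := exists_le_card_chshLosses f g
  exact ⟨u, v, (isoPRB_le_pow_card_chshLosses hε0 (by linarith) _ _ _ _).trans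
    (pow_le_pow_of_le_one hε0 (by linarith) hloss)⟩

theorem le_localPart_isoPRB {n : ℕ} (hn : 1 ≤ n) {ε : ℝ} (hε0 : 0 ≤ ε) (hε4 : ε ≤ 1 / 4) :
    (3 / 8) ^ n * ε ^ ((n + 1) / 2) ≤ localPart (isoPRB n ε) := by
  have hε1 : ε ≤ 1 := by linarith
  have hp1 : (3 / 8 : ℝ) ^ n * ε ^ ((n + 1) / 2) < 1 :=
    calc (3 / 8 : ℝ) ^ n * ε ^ ((n + 1) / 2) ≤ (3 / 8) ^ 1 * 1 :=
          mul_le_mul (pow_le_pow_of_le_one (by norm_num) (by norm_num) hn)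
            (pow_le_one₀ hε0 hε1) (by positivity) (by norm_num)
      _ < 1 := by norm_num
  refine le_localPart_of_mul_detBox_le (isBox_isoPRB hε0 hε1) (nonSignalling_isoPRB ε)
    (by positivity) hp1 pairingA pairingB fun x y u v => ?_
  by_cases h : x = pairingA u ∧ y = pairingB v
  · obtain ⟨rfl, rfl⟩ := h
    rw [detBox_apply_self, mul_one]
    refine le_trans ?_ (pow_mul_pow_card_chshLosses_le_isoPRB hε0 hε4 _ _ _ _)
    exact mul_le_mul_of_nonneg_left
      (pow_le_pow_of_le_one hε0 hε1 (card_chshLosses_pairing_le u v)) (by positivity)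
  · simp only [detBox, if_neg h, mul_zero]
    exact (isBox_isoPRB hε0 hε1).1 x y u v

/-- the local part of n isotropic ε-PRBs is `Θ(ε^⌈n/2⌉)`. -/
theorem stmt10 (n : ℕ) (hn : 1 ≤ n) :
    ∃ c₁ > (0 : ℝ), ∃ c₂ > (0 : ℝ), ∀ ε : ℝ, 0 ≤ ε → ε ≤ 1 / 4 →
      c₁ * ε ^ ((n + 1) / 2) ≤ localPart (isoPRB n ε) ∧
      localPart (isoPRB n ε) ≤ c₂ * ε ^ ((n + 1) / 2) :=
  ⟨(3 / 8) ^ n, by positivity, Fintype.card ((Bits n → Bits n) × (Bits n → Bits n)),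
    by exact_mod_cast Fintype.card_pos,
    fun _ hε0 hε4 => ⟨le_localPart_isoPRB hn hε0 hε4, localPart_isoPRB_le n hε0 hε4⟩⟩
end
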